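/- Let x_j = q(2πj/3) for j = 0, 1, 2, and define f : S¹ → ℝ by f(x) = π/3 + min_{j=0,1,2} d_{S¹}(x, x_j). Then f satisfies f(x) + f(−x) = π for all x ∈ S¹, f is Lipschitz continuous and left-differentiable with ‖∂₋f‖_TV(S¹) = 12; consequently, f is representable by a signed Borel measure on S¹ but is not representable by any non-negative finite Borel measure on S¹. -/

import Mathlib

open MeasureTheory Real Filter Set Complex
open scoped ENNReal NNReal Classical

noncomputable section

instance : MeasurableSpace Circle := borel Circle
instance : BorelSpace Circle := ⟨rfl⟩

namespace CirclePaper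

/-- The spherical (arc-length) distance on the unit circle `S¹ ⊆ ℝ² ≃ ℂ`:
`d_{S¹}(x,y) = arccos ⟨x,y⟩ = arccos (Re (x * conj y))`. -/
def dS1 (x y : Circle) : ℝ := Real.arccos (((x : ℂ) * (starRingEnd ℂ) (y : ℂ)).re)

/-- The antipodal map `T x = -x` (multiplication by `exp(iπ) = -1`). -/
def antipode (x : Circle) : Circle := Circle.exp π * x

/-- Integral of a function against a signed measure (via the Jordan decomposition). -/
def sInt (l : SignedMeasure Circle) (f : Circle → ℝ) : ℝ :=
  (∫ y, f y ∂l.toJordanDecomposition.posPart) - (∫ y, f y ∂l.toJordanDecomposition.negPart)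

/-- `f_λ(x) = ∫_{S¹} d_{S¹}(x,y) λ(dy)`. -/
def fRep (l : SignedMeasure Circle) (x : Circle) : ℝ := sInt l (fun y => dS1 x y)

/-- `f : S¹ → ℝ` has left derivative `L` at `x` w.r.t. the covering `q(t) = exp(it)`,
i.e. `(f(x +_q t) - f(x))/t → L` as `t → 0⁻`. -/
def HasLeftDerivCircleAt (f : Circle → ℝ) (L : ℝ) (x : Circle) : Prop :=
  Filter.Tendsto (fun t : ℝ => (f (Circle.exp t * x) - f x) / t)
    (nhdsWithin 0 (Set.Iio 0)) (nhds L)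

/-- `h : ℝ → ℝ` has left derivative `L` at `t`: `(h(t+s) - h(t))/s → L` as `s → 0⁻`. -/
def HasLeftDerivAtR (h : ℝ → ℝ) (L : ℝ) (t : ℝ) : Prop :=
  Filter.Tendsto (fun s : ℝ => (h (t + s) - h t) / s)
    (nhdsWithin 0 (Set.Iio 0)) (nhds L)

/-- The total variation `‖g‖_{TV(S¹)}` of `g : S¹ → ℝ`: the supremum of
`Σ |g(q(t_i)) - g(q(t_{i+1}))|` over partitions `0 = t_0 ≤ … ≤ t_{n+1} = 2π`. -/
def circleTV (g : Circle → ℝ) : ℝ≥0∞ := eVariationOn (g ∘ Circle.exp) (Set.Icc 0 (2 * π))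

/-- `f` is Lipschitz continuous with respect to the spherical distance. -/
def LipschitzCircle (f : Circle → ℝ) : Prop := ∃ K : ℝ, ∀ x y, |f x - f y| ≤ K * dS1 x y

/-- The normalized Hausdorff 1-measure on `S¹`, i.e. the rotation-invariant Borel
probability measure (the pushforward of normalized Lebesgue measure on `[0, 2π)`). -/
def hausOne : Measure Circle :=
  (ENNReal.ofReal (2 * π))⁻¹ • Measure.map Circle.exp (volume.restrict (Set.Ico 0 (2 * π)))

instance : IsFiniteMeasure hausOne := by
  constructor
  have h1 : (Measure.map Circle.exp (volume.restrict (Set.Ico 0 (2 * π)))) Set.univ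
      = volume (Set.Ico 0 (2 * π)) := by
    rw [Measure.map_apply Circle.exp.continuous.measurable MeasurableSet.univ]
    simp
  simp only [hausOne, Measure.smul_apply, smul_eq_mul, h1, Real.volume_Ico]
  refine ENNReal.mul_lt_top ?_ ?_
  · exact ENNReal.inv_lt_top.mpr (ENNReal.ofReal_pos.mpr (by positivity))
  · exact ENNReal.ofReal_lt_top

/-- The half-open arc `[x, T(x)) = {x +_q t : t ∈ [0, π)}` of length `π` starting at `x`. -/
def halfArc (x : Circle) : Set Circle := (fun t : ℝ => Circle.exp t * x) '' Set.Ico 0 π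

/-- A Borel measure on the circle, regarded as a signed measure
(defined to be `0` if the measure is not finite). -/
def msigned (μ : Measure Circle) : SignedMeasure Circle :=
  if h : IsFiniteMeasure μ then @Measure.toSignedMeasure _ _ μ h else 0

/-!
Lifted along `q`, `f` becomes `fLift u = π/3 + dist(u, (2π/3)ℤ)`, a triangle wave whose slope
alternates between `+1` and `-1` on the intervals `[(n-1)π/3, nπ/3]`. This gives the Lipschitz
bound, the left derivative, and six jumps of size `2` of the derivative over one turn.

On `[0, π]` one checks `f = d(·, x₁) + d(·, x₂) - d(·, -x₀)`; both sides are even and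
`2π`-periodic in the lift, so the identity holds everywhere. It exhibits the signed measure
`δ_{x₁} + δ_{x₂} - δ_{-x₀}` and, since `d(-x, y) = π - d(x, y)`, gives `f(x) + f(-x) = π`.
It also shows `d(x₀, ·) - d(q(π/3), ·) + d(x₁, ·) ≥ π/3` pointwise, whereas the integral of
this function against a representing `ν ≥ 0` would be `f(x₀) - f(q(π/3)) + f(x₁) = 0`;
hence `ν = 0`, contradicting `f(x₀) = π/3`.
-/

theorem _root_.Function.Periodic.eq_of_even_of_eqOn_Icc {f g : ℝ → ℝ} {c : ℝ} (hc : 0 < c)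
    (hf : Function.Periodic f c) (hg : Function.Periodic g c) (hf' : Function.Even f)
    (hg' : Function.Even g) (h : EqOn f g (Icc 0 (c / 2))) : f = g := by
  funext x
  obtain ⟨y, ⟨hy₀, hyc⟩, hxy⟩ := (hf.sub hg).exists_mem_Ico₀ hc x
  rw [← sub_eq_zero, ← Pi.sub_apply, hxy, Pi.sub_apply, sub_eq_zero]
  rcases le_total y (c / 2) with hy | hy
  · exact h ⟨hy₀, hy⟩
  · rw [← hf.sub_eq, ← hg.sub_eq, ← hf' (y - c), ← hg' (y - c), neg_sub]
    exact h ⟨by linarith, by linarith⟩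

theorem _root_.eVariationOn.Icc_eq_edist_of_eqOn_Ioc {α E : Type*} [LinearOrder α]
    [PseudoEMetricSpace E] {f : α → E} {a b : α} (hab : a ≤ b)
    (h : ∀ x ∈ Ioc a b, f x = f b) : eVariationOn f (Icc a b) = edist (f a) (f b) := by
  refine le_antisymm ?_ (eVariationOn.edist_le f (left_mem_Icc.2 hab) (right_mem_Icc.2 hab))
  let φ : α → α := fun x => if x ≤ a then a else b
  have hfφ : EqOn f (f ∘ φ) (Icc a b) := by
    rintro x ⟨hax, hxb⟩
    by_cases hxa : x ≤ a
    · simp [φ, le_antisymm hxa hax]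
    · simp [φ, hxa, h x ⟨lt_of_not_ge hxa, hxb⟩]
  have hφ : MonotoneOn φ (Icc a b) := by
    intro x _ y _ hxy
    simp only [φ]
    split_ifs with hx hy hy
    exacts [le_rfl, hab, absurd (hxy.trans hy) hx, le_rfl]
  have hφab : MapsTo φ (Icc a b) {a, b} := by
    intro x _
    simp only [φ]
    split_ifs <;> simp
  calc eVariationOn f (Icc a b) = eVariationOn (f ∘ φ) (Icc a b) := eVariationOn.congr hfφ
    _ ≤ eVariationOn f {a, b} := eVariationOn.comp_le_of_monotoneOn f φ hφ hφab
    _ = edist (f a) (f b) := eVariationOn.pair f a b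

theorem _root_.MeasureTheory.Measure.dirac_mutuallySingular_dirac {α : Type*}
    [MeasurableSpace α] [MeasurableSingletonClass α] {x y : α} (h : x ≠ y) :
    Measure.dirac x ⟂ₘ Measure.dirac y :=
  ⟨{x}ᶜ, (measurableSet_singleton x).compl, by simp, by simp [h.symm]⟩

theorem _root_.MeasureTheory.Measure.eq_zero_of_forall_le_of_integral_nonpos {α : Type*}
    [MeasurableSpace α] {ν : Measure α} [IsFiniteMeasure ν] {φ : α → ℝ} {c : ℝ} (hc : 0 < c)
    (hφ : Integrable φ ν) (hle : ∀ y, c ≤ φ y) (hint : ∫ y, φ y ∂ν ≤ 0) : ν = 0 := by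
  have h := integral_mono (integrable_const c) hφ hle
  rw [integral_const, smul_eq_mul] at h
  have hν : ν.real univ ≤ 0 := le_of_mul_le_mul_left (by linarith) hc
  rw [← Measure.measure_univ_eq_zero, ← measureReal_eq_zero_iff]
  exact le_antisymm hν measureReal_nonneg

lemma hasLeftDerivAtR_of_eqOn_Icc {h : ℝ → ℝ} {σ β c a : ℝ} (hca : c < a)
    (heq : ∀ u ∈ Icc c a, h u = σ * u + β) : HasLeftDerivAtR h σ a := by
  have hmem : Ioo (c - a) 0 ∈ nhdsWithin (0 : ℝ) (Iio 0) := Ioo_mem_nhdsLT (by linarith)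
  refine tendsto_const_nhds.congr' (eventuallyEq_of_mem hmem fun t ⟨ht₁, ht₂⟩ => ?_)
  rw [heq (a + t) ⟨by linarith, by linarith⟩, heq a ⟨hca.le, le_rfl⟩,
    show σ * (a + t) + β - (σ * a + β) = σ * t by ring, mul_div_cancel_right₀ _ ht₂.ne]

lemma hasLeftDerivCircleAt_of_hasLeftDerivAtR {f : Circle → ℝ} {F : ℝ → ℝ}
    (hF : ∀ u, f (Circle.exp u) = F u) {L : ℝ} {x : Circle} (h : HasLeftDerivAtR F L (arg x)) :
    HasLeftDerivCircleAt f L x := by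
  refine h.congr fun t => ?_
  rw [← hF, ← hF, Circle.exp_add, Circle.exp_arg, mul_comm]

lemma dS1_eq_angle (x y : Circle) :
    dS1 x y = InnerProductGeometry.angle (x : ℂ) (y : ℂ) := by
  rw [dS1, InnerProductGeometry.angle, Complex.inner, Circle.norm_coe, Circle.norm_coe,
    mul_one, div_one, ← Complex.conj_re, map_mul, Complex.conj_conj, mul_comm]

lemma dS1_comm (x y : Circle) : dS1 x y = dS1 y x := by
  simp only [dS1_eq_angle, InnerProductGeometry.angle_comm]

lemma dS1_nonneg (x y : Circle) : 0 ≤ dS1 x y := arccos_nonneg _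

lemma dS1_le_pi (x y : Circle) : dS1 x y ≤ π := arccos_le_pi _

lemma dS1_triangle (x y z : Circle) : dS1 x z ≤ dS1 x y + dS1 y z := by
  simp only [dS1_eq_angle]
  exact InnerProductGeometry.angle_le_angle_add_angle _ _ _

lemma abs_dS1_sub_dS1_le (x y z : Circle) : |dS1 x z - dS1 y z| ≤ dS1 x y := by
  rw [abs_sub_le_iff]
  constructor
  · linarith [dS1_triangle x y z]
  · linarith [dS1_triangle y x z, dS1_comm x y]

lemma lipschitzCircle_of_eq_add_min {f : Circle → ℝ} {c : ℝ} {a b d : Circle}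
    (hf : ∀ x, f x = c + min (dS1 x a) (min (dS1 x b) (dS1 x d))) : LipschitzCircle f := by
  refine ⟨1, fun x y => ?_⟩
  rw [hf, hf, add_sub_add_left_eq_sub, one_mul]
  exact (abs_min_sub_min_le_max _ _ _ _).trans <| max_le (abs_dS1_sub_dS1_le _ _ _) <|
    (abs_min_sub_min_le_max _ _ _ _).trans <|
      max_le (abs_dS1_sub_dS1_le _ _ _) (abs_dS1_sub_dS1_le _ _ _)

lemma continuous_dS1 (x : Circle) : Continuous (dS1 x) :=
  continuous_arccos.comp <| Complex.continuous_re.comp <|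
    continuous_const.mul (continuous_star.comp continuous_subtype_val)

lemma integrable_dS1 (x : Circle) (μ : Measure Circle) [IsFiniteMeasure μ] :
    Integrable (dS1 x) μ :=
  Integrable.mono' (integrable_const π) (continuous_dS1 x).aestronglyMeasurable
    (Eventually.of_forall fun y => by
      rw [Real.norm_eq_abs, abs_of_nonneg (dS1_nonneg x y)]; exact dS1_le_pi x y)

def arcDist (θ : ℝ) : ℝ := arccos (Real.cos θ)

lemma dS1_exp_exp (a b : ℝ) : dS1 (Circle.exp a) (Circle.exp b) = arcDist (a - b) := by
  rw [dS1, arcDist, Circle.coe_exp, Circle.coe_exp, ← Complex.exp_conj, ← Complex.exp_add,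
    map_mul, Complex.conj_ofReal, Complex.conj_I, mul_neg, ← sub_eq_add_neg, ← sub_mul,
    ← Complex.ofReal_sub, Complex.exp_ofReal_mul_I_re]

lemma arcDist_eq_abs {θ : ℝ} (h : |θ| ≤ π) : arcDist θ = |θ| := by
  rw [arcDist, ← Real.cos_abs, arccos_cos (abs_nonneg θ) h]

lemma arcDist_periodic : Function.Periodic arcDist (2 * π) := fun θ => by
  simp [arcDist]

lemma arcDist_even : Function.Even arcDist := fun θ => by
  simp [arcDist]

lemma arcDist_nonneg (θ : ℝ) : 0 ≤ arcDist θ := arccos_nonneg _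

lemma arcDist_add_pi (θ : ℝ) : arcDist (θ + π) = π - arcDist θ := by
  rw [arcDist, arcDist, Real.cos_add_pi, arccos_neg]

lemma arcDist_neg_sub {a b : ℝ} (h : a + b = 2 * π) (v : ℝ) :
    arcDist (-v - a) = arcDist (v - b) := by
  rw [← arcDist_even, ← arcDist_periodic (v - b)]
  congr 1
  linarith

def fLift (u : ℝ) : ℝ :=
  π / 3 + min (arcDist u) (min (arcDist (u - 2 * π / 3)) (arcDist (u - 4 * π / 3)))

lemma fLift_periodic : Function.Periodic fLift (2 * π / 3) := fun u => by
  have h₁ : u + 2 * π / 3 - 4 * π / 3 = u - 2 * π / 3 := by ring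
  have h₂ : arcDist (u + 2 * π / 3) = arcDist (u - 4 * π / 3) := by
    rw [← arcDist_periodic (u - 4 * π / 3)]; ring_nf
  simp only [fLift, add_sub_cancel_right, h₁, h₂]
  rw [min_comm, min_assoc]

lemma fLift_even : Function.Even fLift := fun u => by
  simp only [fLift, arcDist_even u, arcDist_neg_sub (by ring : 2 * π / 3 + 4 * π / 3 = 2 * π),
    arcDist_neg_sub (by ring : 4 * π / 3 + 2 * π / 3 = 2 * π),
    min_comm (arcDist (u - 4 * π / 3))]

lemma pi_div_three_le_fLift (u : ℝ) : π / 3 ≤ fLift u :=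
  le_add_of_nonneg_right (le_min (arcDist_nonneg _) (le_min (arcDist_nonneg _) (arcDist_nonneg _)))

lemma fLift_eq_of_abs_le {u : ℝ} (hu : |u| ≤ π / 3) : fLift u = π / 3 + |u| := by
  obtain ⟨hu₁, hu₂⟩ := abs_le.mp hu
  have hπ := pi_pos
  have h₁ : arcDist (u - 2 * π / 3) = 2 * π / 3 - u := by
    rw [arcDist_eq_abs (abs_le.mpr ⟨by linarith, by linarith⟩), abs_of_nonpos (by linarith)]
    ring
  have h₂ : arcDist (u - 4 * π / 3) = u + 2 * π / 3 := by
    rw [← arcDist_periodic, show u - 4 * π / 3 + 2 * π = u + 2 * π / 3 by ring,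
      arcDist_eq_abs (abs_le.mpr ⟨by linarith, by linarith⟩), abs_of_nonneg (by linarith)]
  rw [fLift, arcDist_eq_abs (by linarith), h₁, h₂,
    min_eq_left (le_min (by linarith) (by linarith))]

lemma fLift_eq_of_mem_Icc {v : ℝ} (hv₀ : 0 ≤ v) (hv : v ≤ π) :
    fLift v = arcDist (v - 2 * π / 3) + arcDist (v - 4 * π / 3) - arcDist (v - π) := by
  have hπ := pi_pos
  have hπv : arcDist (v - π) = π - v := by
    rw [arcDist_eq_abs (abs_le.mpr ⟨by linarith, by linarith⟩), abs_of_nonpos (by linarith)]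
    ring
  rcases le_total v (π / 3) with hv' | hv'
  · have h₁ : arcDist (v - 2 * π / 3) = 2 * π / 3 - v := by
      rw [arcDist_eq_abs (abs_le.mpr ⟨by linarith, by linarith⟩), abs_of_nonpos (by linarith)]
      ring
    have h₂ : arcDist (v - 4 * π / 3) = v + 2 * π / 3 := by
      rw [← arcDist_periodic, show v - 4 * π / 3 + 2 * π = v + 2 * π / 3 by ring,
        arcDist_eq_abs (abs_le.mpr ⟨by linarith, by linarith⟩), abs_of_nonneg (by linarith)]
    rw [fLift_eq_of_abs_le (abs_le.mpr ⟨by linarith, hv'⟩), abs_of_nonneg hv₀, h₁, h₂, hπv]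
    ring
  · have h₂ : arcDist (v - 4 * π / 3) = 4 * π / 3 - v := by
      rw [arcDist_eq_abs (abs_le.mpr ⟨by linarith, by linarith⟩), abs_of_nonpos (by linarith)]
      ring
    rw [← fLift_periodic.sub_eq, fLift_eq_of_abs_le (abs_le.mpr ⟨by linarith, by linarith⟩),
      arcDist_eq_abs (abs_le.mpr ⟨by linarith, by linarith⟩), h₂, hπv]
    ring

lemma fLift_eq (u : ℝ) :
    fLift u = arcDist (u - 2 * π / 3) + arcDist (u - 4 * π / 3) - arcDist (u - π) := by
  refine congrFun (Function.Periodic.eq_of_even_of_eqOn_Icc (c := 2 * π)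
    (g := fun v => arcDist (v - 2 * π / 3) + arcDist (v - 4 * π / 3) - arcDist (v - π))
    (by positivity) ?_ ?_ fLift_even ?_ ?_) u
  · have h := fLift_periodic.nat_mul 3
    rwa [show ((3 : ℕ) : ℝ) * (2 * π / 3) = 2 * π by push_cast; ring] at h
  · intro v
    simp only [show ∀ a, v + 2 * π - a = (v - a) + 2 * π by intro a; ring, arcDist_periodic _]
  · intro v
    simp only [arcDist_neg_sub (by ring : 2 * π / 3 + 4 * π / 3 = 2 * π),
      arcDist_neg_sub (by ring : 4 * π / 3 + 2 * π / 3 = 2 * π),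
      arcDist_neg_sub (by ring : π + π = 2 * π)]
    ring
  · rintro v ⟨hv₀, hv⟩
    exact fLift_eq_of_mem_Icc hv₀ (by linarith)

lemma fLift_add_pi (u : ℝ) : fLift (u + π) = π - fLift u := by
  have h₁ := arcDist_add_pi (u - 2 * π / 3)
  have h₂ := arcDist_add_pi (u - 4 * π / 3)
  have h₃ := arcDist_add_pi (u - π)
  rw [sub_add_cancel] at h₃
  rw [fLift_eq, fLift_eq, show u + π - 2 * π / 3 = u - 2 * π / 3 + π by ring,
    show u + π - 4 * π / 3 = u - 4 * π / 3 + π by ring, add_sub_cancel_right, h₁, h₂, h₃]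
  ring

def pieceSlope (n : ℤ) : ℝ := if Even n then -1 else 1

lemma fLift_affine_on_piece (n : ℤ) :
    ∃ β, ∀ u ∈ Icc ((n - 1) * (π / 3)) (n * (π / 3)), fLift u = pieceSlope n * u + β := by
  have hπ := pi_pos
  obtain ⟨m, rfl | rfl⟩ := Int.even_or_odd' n
  · refine ⟨π / 3 + m * (2 * π / 3), fun u ⟨hu₁, hu₂⟩ => ?_⟩
    push_cast at hu₁ hu₂
    rw [← (fLift_periodic.int_mul m).sub_eq, fLift_eq_of_abs_le (abs_le.mpr
      ⟨by linarith, by linarith⟩), abs_of_nonpos (by linarith), pieceSlope,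
      if_pos (even_two_mul m)]
    ring
  · refine ⟨π / 3 - m * (2 * π / 3), fun u ⟨hu₁, hu₂⟩ => ?_⟩
    push_cast at hu₁ hu₂
    rw [← (fLift_periodic.int_mul m).sub_eq, fLift_eq_of_abs_le (abs_le.mpr
      ⟨by linarith, by linarith⟩), abs_of_nonneg (by linarith), pieceSlope,
      if_neg (Int.not_even_iff_odd.mpr (odd_two_mul_add_one m))]
    ring

lemma hasLeftDerivAtR_fLift (a : ℝ) : HasLeftDerivAtR fLift (pieceSlope ⌈a / (π / 3)⌉) a := by
  have hπ : 0 < π / 3 := by positivity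
  have hceil := Int.ceil_lt_add_one (a / (π / 3))
  set n := ⌈a / (π / 3)⌉
  have ha₁ : (n - 1) * (π / 3) < a := by
    rw [← lt_div_iff₀ hπ]; linarith
  have ha₂ : a ≤ n * (π / 3) := (div_le_iff₀ hπ).mp (Int.le_ceil _)
  obtain ⟨β, hβ⟩ := fLift_affine_on_piece n
  exact hasLeftDerivAtR_of_eqOn_Icc ha₁ fun u ⟨hu₁, hu₂⟩ => hβ u ⟨hu₁, hu₂.trans ha₂⟩

lemma edist_pieceSlope_add_one (n : ℤ) : edist (pieceSlope n) (pieceSlope (n + 1)) = 2 := by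
  rcases Int.even_or_odd n with h | h
  · rw [pieceSlope, pieceSlope, if_pos h, if_neg (Int.not_even_iff_odd.mpr h.add_one),
      edist_dist, Real.dist_eq]
    norm_num
  · rw [pieceSlope, pieceSlope, if_neg (Int.not_even_iff_odd.mpr h), if_pos h.add_one,
      edist_dist, Real.dist_eq]
    norm_num

-- `⌈·⌉` selects the piece `((n-1)π/3, nπ/3]` that lies to the left of the point.
def leftSlope (x : Circle) : ℝ := pieceSlope ⌈arg x / (π / 3)⌉

lemma leftSlope_exp (t : ℝ) : leftSlope (Circle.exp t) = pieceSlope ⌈t / (π / 3)⌉ := by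
  obtain ⟨m, hm⟩ := Circle.exp_eq_exp.mp (Circle.exp_arg (Circle.exp t))
  have h6 : (t + m * (2 * π)) / (π / 3) = t / (π / 3) + ((6 * m : ℤ) : ℝ) := by
    push_cast
    field_simp
    ring
  have h6m : Even (6 * m) := ⟨3 * m, by ring⟩
  rw [leftSlope, hm, h6, Int.ceil_add_intCast]
  simp [pieceSlope, Int.even_add, h6m]

lemma circleTV_leftSlope : circleTV leftSlope = 12 := by
  have hπ : 0 < π / 3 := by positivity
  let g : ℝ → ℝ := fun t => pieceSlope ⌈t / (π / 3)⌉
  have hg : leftSlope ∘ Circle.exp = g := funext leftSlope_exp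
  let I : ℕ → ℝ := fun i => i * (π / 3)
  have hI : Monotone I := fun i j hij => by
    simp only [I]
    gcongr
  have hgI : ∀ i : ℕ, g (I i) = pieceSlope i := fun i => by
    simp [g, I, mul_div_cancel_right₀ _ hπ.ne']
  have hpiece : ∀ i : ℕ, eVariationOn g (Icc (I i) (I (i + 1))) = 2 := by
    intro i
    rw [eVariationOn.Icc_eq_edist_of_eqOn_Ioc (hI (Nat.le_add_right i 1)), hgI, hgI]
    · push_cast
      exact edist_pieceSlope_add_one i
    · rintro t ⟨ht₁, ht₂⟩
      rw [hgI]
      refine congrArg pieceSlope (Int.ceil_eq_iff.mpr ⟨?_, ?_⟩)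
      · rw [lt_div_iff₀ hπ]
        push_cast
        simpa [I] using ht₁
      · rw [div_le_iff₀ hπ]
        simpa [I] using ht₂
  rw [circleTV, hg, show Icc 0 (2 * π) = Icc (I 0) (I 6) by simp only [I]; push_cast; ring_nf,
    ← eVariationOn.sum' g hI, Finset.sum_congr rfl fun i _ => hpiece i, Finset.sum_const,
    Finset.card_range, nsmul_eq_mul]
  norm_num

lemma add_antipode_eq_pi {f : Circle → ℝ} (hfF : ∀ u, f (Circle.exp u) = fLift u) (x : Circle) :
    f x + f (antipode x) = π := by
  rw [← Circle.exp_arg x, antipode, ← Circle.exp_add, hfF, hfF, add_comm π, fLift_add_pi]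
  ring

lemma exp_ne_exp_pi {θ : ℝ} (h₁ : -π < θ) (h₂ : θ < π) : Circle.exp θ ≠ Circle.exp π := fun h => by
  have h' := congrArg (fun z : Circle => arg (z : ℂ)) h
  simp only [Circle.arg_exp h₁ h₂.le, Circle.arg_exp (by linarith [pi_pos]) le_rfl] at h'
  exact h₂.ne h'

def threePointJordan : JordanDecomposition Circle where
  posPart := Measure.dirac (Circle.exp (2 * π / 3)) + Measure.dirac (Circle.exp (4 * π / 3))
  negPart := Measure.dirac (Circle.exp π)
  mutuallySingular := by
    have hπ := pi_pos
    have h₁ : Circle.exp (2 * π / 3) ≠ Circle.exp π := exp_ne_exp_pi (by linarith) (by linarith)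
    have h₂ : Circle.exp (4 * π / 3) ≠ Circle.exp π := by
      rw [← Circle.periodic_exp.sub_eq]
      exact exp_ne_exp_pi (by linarith) (by linarith)
    exact (Measure.dirac_mutuallySingular_dirac h₁).add_left
      (Measure.dirac_mutuallySingular_dirac h₂)

lemma eq_fRep_threePointJordan {f : Circle → ℝ} (hfF : ∀ u, f (Circle.exp u) = fLift u)
    (x : Circle) : f x = fRep threePointJordan.toSignedMeasure x := by
  rw [fRep, sInt, JordanDecomposition.toJordanDecomposition_toSignedMeasure]
  simp only [threePointJordan]
  rw [integral_add_measure (integrable_dS1 _ _) (integrable_dS1 _ _), integral_dirac,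
    integral_dirac, integral_dirac, ← Circle.exp_arg x, dS1_exp_exp, dS1_exp_exp, dS1_exp_exp,
    hfF, fLift_eq]

lemma pi_div_three_le_three_point_sum (y : Circle) :
    π / 3 ≤ dS1 (Circle.exp 0) y - dS1 (Circle.exp (π / 3)) y + dS1 (Circle.exp (2 * π / 3)) y := by
  rw [← Circle.exp_arg y, dS1_exp_exp, dS1_exp_exp, dS1_exp_exp]
  set b := arg (y : ℂ)
  have h := fLift_eq (b + 2 * π / 3)
  rw [show b + 2 * π / 3 - 2 * π / 3 = b by ring,
    show b + 2 * π / 3 - 4 * π / 3 = b - 2 * π / 3 by ring,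
    show b + 2 * π / 3 - π = b - π / 3 by ring] at h
  rw [zero_sub, arcDist_even, ← arcDist_even (π / 3 - b), neg_sub, ← arcDist_even (2 * π / 3 - b),
    neg_sub]
  linarith [pi_div_three_le_fLift (b + 2 * π / 3)]

lemma not_representable_by_measure {f : Circle → ℝ} (hfF : ∀ u, f (Circle.exp u) = fLift u) :
    ¬ ∃ ν : Measure Circle, IsFiniteMeasure ν ∧ ∀ x, f x = ∫ y, dS1 x y ∂ν := by
  rintro ⟨ν, hν, hrep⟩
  have hπ := pi_pos
  have hf₀ : f (Circle.exp 0) = π / 3 := by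
    rw [hfF, fLift_eq_of_abs_le (by rw [abs_zero]; positivity), abs_zero, add_zero]
  have hf₁ : f (Circle.exp (π / 3)) = 2 * π / 3 := by
    rw [hfF, fLift_eq_of_abs_le (abs_of_pos (by positivity)).le, abs_of_pos (by positivity)]
    ring
  have hf₂ : f (Circle.exp (2 * π / 3)) = π / 3 := by
    rw [hfF, ← zero_add (2 * π / 3), fLift_periodic, ← hfF, hf₀]
  have hint₀ := integrable_dS1 (Circle.exp 0) ν
  have hint₁ := integrable_dS1 (Circle.exp (π / 3)) ν
  have hint₂ := integrable_dS1 (Circle.exp (2 * π / 3)) ν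
  have hν0 : ν = 0 := by
    refine Measure.eq_zero_of_forall_le_of_integral_nonpos (by positivity)
      ((hint₀.sub hint₁).add hint₂) pi_div_three_le_three_point_sum ?_
    rw [integral_add' (hint₀.sub hint₁) hint₂, integral_sub' hint₀ hint₁, ← hrep, ← hrep, ← hrep,
      hf₀, hf₁, hf₂]
    linarith
  have h₀ := hrep (Circle.exp 0)
  rw [hν0, integral_zero_measure, hf₀] at h₀
  linarith

/-- For `x_j = q(2πj/3)` and `f(x) = π/3 + min_j d(x, x_j)`, `f` satisfies
`f(x) + f(-x) = π`, is Lipschitz, left-differentiable with `‖∂₋f‖_{TV(S¹)} = 12`; hence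
`f` is representable by a signed measure but by no non-negative finite Borel measure. -/
theorem stmt18 (f : Circle → ℝ)
    (hf : ∀ x : Circle, f x = π / 3 +
      min (dS1 x (Circle.exp 0))
        (min (dS1 x (Circle.exp (2 * π / 3))) (dS1 x (Circle.exp (4 * π / 3))))) :
    (∀ x : Circle, f x + f (antipode x) = π) ∧
    LipschitzCircle f ∧
    (∃ f' : Circle → ℝ, (∀ x : Circle, HasLeftDerivCircleAt f (f' x) x) ∧
      circleTV f' = 12) ∧
    (∃ lam : SignedMeasure Circle, ∀ x : Circle, f x = fRep lam x) ∧
    ¬ ∃ ν : Measure Circle, IsFiniteMeasure ν ∧ ∀ x : Circle, f x = ∫ y, dS1 x y ∂ν := by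
  have hfF : ∀ u, f (Circle.exp u) = fLift u := fun u => by
    rw [hf, dS1_exp_exp, dS1_exp_exp, dS1_exp_exp, sub_zero, fLift]
  exact ⟨add_antipode_eq_pi hfF, lipschitzCircle_of_eq_add_min hf,
    ⟨leftSlope, fun x => hasLeftDerivCircleAt_of_hasLeftDerivAtR hfF (hasLeftDerivAtR_fLift _),
      circleTV_leftSlope⟩,
    ⟨threePointJordan.toSignedMeasure, eq_fRep_threePointJordan hfF⟩,
    not_representable_by_measure hfF⟩

end CirclePaper
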